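/- Let d ∈ D, let S be an orthogonal collection with ⟨S⟩ functorially finite, and let s_d → d → z_d → Σs_d be the decomposition triangle with respect to the torsion pair (⟨S⟩, S^⊥), where s_d → d is a minimal right ⟨S⟩-approximation. Then Hom(S, s_d) → Hom(S, d) is an isomorphism. If moreover w ≥ 1 and S is an 𝕊_{-w}-subcategory, then Hom(Σ^{w-1}z_d, S) → Hom(Σ^{w-1}d, S) is a monomorphism, and if Hom(d, Σ^{1-w}S) = 0 then Hom(z_d, Σ^{1-w}S) = 0. -/

import Mathlib

/-!
Surjectivity of `Hom(S, s_d) → Hom(S, d)` is the long exact sequence together with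
`Hom(S, z_d) = 0`. For injectivity, let `u : s → s_d` be nonzero with `u ≫ f = 0`. Then `f`
factors through the cone `c` of `u`; by orthogonality of `S` and induction over `⟨S⟩`, every
map `Σs → z_d` extends along `Σu`, which forces the factorisation `c → d` to lift through `f`.
This yields an endomorphism of `s_d` fixing `f` and killing `u`, contradicting right minimality.

For the second part write `s ≅ 𝕊Σ^w t` with `t ∈ S`. By Serre duality a map
`u : Σ^{w-1}z_d → s` vanishes as soon as it kills every map `Σ^w t → Σ^{w-1}z_d`. If
`Σ^{w-1}g ≫ u = 0`, then `u` factors through the third morphism of the shifted triangle, and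
every map from `Σ^w t` into it is zero because `Hom(t, s_d) → Hom(t, d)` is injective.
-/


open CategoryTheory CategoryTheory.Limits CategoryTheory.Pretriangulated

universe v u u₂

namespace SMSPaper

/-- Serre duality data on a `k`-linear category, encoded by trace maps. -/
structure SerreData (k : Type u₂) [Field k] (D : Type u) [Category.{v} D] [Preadditive D]
    [Linear k D] where
  F : D ⥤ D
  isEquiv : F.IsEquivalence
  tr : (x : D) → (x ⟶ F.obj x) →ₗ[k] k
  comm : ∀ {x y : D} (f : x ⟶ y) (g : y ⟶ F.obj x), tr x (f ≫ g) = tr y (g ≫ F.map f)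
  nondeg₁ : ∀ {x y : D} (f : x ⟶ y), (∀ g : y ⟶ F.obj x, tr x (f ≫ g) = 0) → f = 0
  nondeg₂ : ∀ {x y : D} (g : y ⟶ F.obj x), (∀ f : x ⟶ y, tr x (f ≫ g) = 0) → g = 0

variable {C : Type u} [Category.{v} C] [Preadditive C] [HasZeroObject C]
  [HasShift C ℤ] [∀ n : ℤ, (shiftFunctor C n).Additive] [Pretriangulated C]

/-- `f : x ⟶ d` is a right `X`-approximation of `d`. -/
def IsRightApprox (X : Set C) {x d : C} (f : x ⟶ d) : Prop :=
  x ∈ X ∧ ∀ s ∈ X, ∀ g : s ⟶ d, ∃ h : s ⟶ x, h ≫ f = g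

/-- `f : d ⟶ x` is a left `X`-approximation of `d`. -/
def IsLeftApprox (X : Set C) {d x : C} (f : d ⟶ x) : Prop :=
  x ∈ X ∧ ∀ s ∈ X, ∀ g : d ⟶ s, ∃ h : x ⟶ s, f ≫ h = g

def RightMinimal {x d : C} (f : x ⟶ d) : Prop :=
  ∀ g : x ⟶ x, g ≫ f = f → IsIso g

def LeftMinimal {d x : C} (f : d ⟶ x) : Prop :=
  ∀ g : x ⟶ x, f ≫ g = f → IsIso g

def IsMinimalRightApprox (X : Set C) {x d : C} (f : x ⟶ d) : Prop :=
  IsRightApprox X f ∧ RightMinimal f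

def IsMinimalLeftApprox (X : Set C) {d x : C} (f : d ⟶ x) : Prop :=
  IsLeftApprox X f ∧ LeftMinimal f

def ContravariantlyFinite (X : Set C) : Prop :=
  ∀ d : C, ∃ (x : C) (f : x ⟶ d), IsRightApprox X f

def CovariantlyFinite (X : Set C) : Prop :=
  ∀ d : C, ∃ (x : C) (f : d ⟶ x), IsLeftApprox X f

def FunctoriallyFinite (X : Set C) : Prop :=
  ContravariantlyFinite X ∧ CovariantlyFinite X

/-- `X * Y`: objects arising as extensions of an object of `Y` by an object of `X`. -/
def extStar (X Y : Set C) : Set C :=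
  {d | ∃ (x y : C) (f : x ⟶ d) (g : d ⟶ y) (h : y ⟶ x⟦(1 : ℤ)⟧),
    (Triangle.mk f g h ∈ distTriang C) ∧ x ∈ X ∧ y ∈ Y}

def ExtClosed (X : Set C) : Prop := extStar X X ⊆ X

/-- extension closure: smallest extension-closed subcategory containing `X`. -/
def extClosure (X : Set C) : Set C := ⋂₀ {T : Set C | X ⊆ T ∧ ExtClosed T}

/-- closure under direct summands. -/
def sumClosure (X : Set C) : Set C :=
  {d | ∃ x ∈ X, ∃ (i : d ⟶ x) (r : x ⟶ d), i ≫ r = 𝟙 d}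

/-- `Sn S n` is `(S)_{n+1}` of the paper: `(S)_1 = S`, `(S)_{n+1} = (S * (S)_n)^⊕`. -/
def Sn (S : Set C) : ℕ → Set C
  | 0 => S
  | n + 1 => sumClosure (extStar S (Sn S n))

def shiftSet (i : ℤ) (S : Set C) : Set C :=
  {d | ∃ s ∈ S, Nonempty (d ≅ s⟦i⟧)}

/-- `S ∪ Σ⁻¹S ∪ ⋯ ∪ Σ^{1-w}S`. -/
def shiftUnion (w : ℕ) (S : Set C) : Set C :=
  {d | ∃ i : ℕ, i < w ∧ d ∈ shiftSet (-(i : ℤ)) S}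

/-- `starChain S n = ⟨S⟩ * Σ⁻¹⟨S⟩ * ⋯ * Σ^{-n}⟨S⟩`. -/
def starChain (S : Set C) : ℕ → Set C
  | 0 => extClosure S
  | n + 1 => extStar (starChain S n) (shiftSet (-((n : ℤ) + 1)) (extClosure S))

def rightPerp (S : Set C) : Set C := {d | ∀ s ∈ S, ∀ f : s ⟶ d, f = 0}

def leftPerp (S : Set C) : Set C := {d | ∀ s ∈ S, ∀ f : d ⟶ s, f = 0}

/-- `S^{⊥_w} = {d : Hom(Σ^i S, d) = 0 for 0 ≤ i ≤ w}`. -/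
def perpW (w : ℕ) (S : Set C) : Set C :=
  {d | ∀ i : ℕ, i ≤ w → ∀ s ∈ S, ∀ f : s⟦(i : ℤ)⟧ ⟶ d, f = 0}

/-- `^{⊥_w}S = {d : Hom(d, Σ^{-i} S) = 0 for 0 ≤ i ≤ w}`. -/
def wPerp (w : ℕ) (S : Set C) : Set C :=
  {d | ∀ i : ℕ, i ≤ w → ∀ s ∈ S, ∀ f : d ⟶ s⟦(-(i : ℤ))⟧, f = 0}

def Indec (x : C) : Prop :=
  ¬ IsZero x ∧ ∀ e : x ⟶ x, e ≫ e = e → e = 0 ∨ e = 𝟙 x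

/-- `(X, Y)` is an `S`-mutation pair. -/
def IsMutationPair (S X Y : Set C) : Prop :=
  X = leftPerp S ∩ rightPerp S ∩ leftPerp (shiftSet (-1) S) ∩
      shiftSet (-1) (extStar (extClosure S) Y) ∧
  Y = leftPerp S ∩ rightPerp S ∩ rightPerp (shiftSet 1 S) ∩
      shiftSet 1 (extStar X (extClosure S))

/-- `r` is the right mutation of `d` with respect to `S`. -/
def IsRightMutation (S : Set C) (d r : C) : Prop :=
  ∃ (s : C) (α : s ⟶ d⟦(1 : ℤ)⟧) (β : d⟦(1 : ℤ)⟧ ⟶ r) (γ : r ⟶ s⟦(1 : ℤ)⟧),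
    (Triangle.mk α β γ ∈ distTriang C) ∧ IsMinimalRightApprox (extClosure S) α

/-- `l` is the left mutation of `d` with respect to `S`. -/
def IsLeftMutation (S : Set C) (d l : C) : Prop :=
  ∃ (s : C) (β : l ⟶ d⟦(-1 : ℤ)⟧) (α : d⟦(-1 : ℤ)⟧ ⟶ s) (γ : s ⟶ l⟦(1 : ℤ)⟧),
    (Triangle.mk β α γ ∈ distTriang C) ∧ IsMinimalLeftApprox (extClosure S) α

/-- the extension closure of `R` computed inside the triangulated category `Z`,
whose triangles `x → z → y → x⟨1⟩` come from a cone `c` of `x → z` in `D` together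
with a minimal right `⟨S⟩`-approximation triangle `s → c → y → Σs`. -/
inductive zExtClosure (S Z R : Set C) : C → Prop
  | of (r : C) (hr : r ∈ R) : zExtClosure S Z R r
  | ext (x z y c s : C) (f : x ⟶ z) (g₁ : z ⟶ c) (h₁ : c ⟶ x⟦(1 : ℤ)⟧)
      (α : s ⟶ c) (β : c ⟶ y) (γ : y ⟶ s⟦(1 : ℤ)⟧)
      (hT : Triangle.mk f g₁ h₁ ∈ distTriang C)
      (hT' : Triangle.mk α β γ ∈ distTriang C)
      (hmin : IsMinimalRightApprox (extClosure S) α)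
      (hz : z ∈ Z)
      (hx : zExtClosure S Z R x) (hy : zExtClosure S Z R y) :
      zExtClosure S Z R z

variable (k : Type u₂) [Field k] [Linear k C]

/-- orthogonal collection: `dim Hom(x, y) = δ_{x,y}`. -/
def IsOrthogonalCollection (S : Set C) : Prop :=
  (∀ x ∈ S, Module.finrank k (x ⟶ x) = 1) ∧
  ∀ x ∈ S, ∀ y ∈ S, x ≠ y → ∀ f : x ⟶ y, f = 0

/-- `w`-orthogonal collection. -/
def IsWOrthogonal (w : ℕ) (S : Set C) : Prop :=
  IsOrthogonalCollection k S ∧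
  ∀ i : ℕ, 1 ≤ i → i ≤ w - 1 → ∀ x ∈ S, ∀ y ∈ S, ∀ f : x⟦(i : ℤ)⟧ ⟶ y, f = 0

/-- `w`-simple-minded system. -/
def IsWSMS (w : ℕ) (S : Set C) : Prop :=
  IsWOrthogonal k w S ∧ ∀ d : C, d ∈ sumClosure (extClosure (shiftUnion w S))

def IsRightRiedtmann (w : ℕ) (S : Set C) : Prop :=
  IsWOrthogonal k w S ∧
  ∀ d : C, (∀ i : ℕ, i < w → ∀ s ∈ S, ∀ f : d⟦(i : ℤ)⟧ ⟶ s, f = 0) → IsZero d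

def IsLeftRiedtmann (w : ℕ) (S : Set C) : Prop :=
  IsWOrthogonal k w S ∧
  ∀ d : C, (∀ i : ℕ, i < w → ∀ s ∈ S, ∀ f : s⟦(i : ℤ)⟧ ⟶ d, f = 0) → IsZero d

/-- `S` is an `𝕊_w`-subcategory (`𝕊_w = 𝕊 Σ^{-w}`). -/
def IsSwSubcat (SD : SerreData k C) (w : ℤ) (S : Set C) : Prop :=
  ∀ x : C, x ∈ S ↔ ∃ s ∈ S, Nonempty (x ≅ SD.F.obj (s⟦-w⟧))

/-- the universal map `z → 𝕊z`, corresponding to the trace functional on `End(z)`. -/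
def IsUniversalMap (SD : SerreData k C) (z : C) (h : z ⟶ SD.F.obj z) : Prop :=
  SD.tr z h = 1 ∧ ∀ f : z ⟶ z, ¬ IsIso f → SD.tr z (f ≫ h) = 0

section

variable {k}

lemma subset_extClosure (S : Set C) : S ⊆ extClosure S :=
  fun _ hx => Set.mem_sInter.2 fun _ hT => hT.1 hx

lemma extClosure_subset {S T : Set C} (hST : S ⊆ T) (hT : ExtClosed T) : extClosure S ⊆ T :=
  Set.sInter_subset_of_mem ⟨hST, hT⟩

lemma extClosed_extClosure (S : Set C) : ExtClosed (extClosure S) := by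
  rintro d ⟨a, b, ia, pb, δ, hT, ha, hb⟩
  exact Set.mem_sInter.2 fun T hT' =>
    hT'.2 ⟨a, b, ia, pb, δ, hT, Set.mem_sInter.1 ha T hT', Set.mem_sInter.1 hb T hT'⟩

lemma extClosed_leftPerp (X : Set C) : ExtClosed (leftPerp X) := by
  rintro d ⟨a, b, ia, pb, δ, hT, ha, hb⟩ x hx φ
  obtain ⟨ψ, rfl⟩ := Triangle.yoneda_exact₂ _ hT φ (ha x hx _)
  rw [hb x hx ψ]
  exact comp_zero

lemma extClosure_subset_leftPerp_rightPerp (S : Set C) :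
    extClosure S ⊆ leftPerp (rightPerp S) :=
  extClosure_subset (fun s hs _ hz φ => hz s hs φ) (extClosed_leftPerp _)

lemma isIso_of_finrank_eq_one {k A : Type*} [Field k] [Category A] [Preadditive A]
    [Linear k A] {s : A} (hs : Module.finrank k (s ⟶ s) = 1) {u : s ⟶ s} (hu : u ≠ 0) :
    IsIso u := by
  have hid : 𝟙 s ≠ 0 := fun h => by
    have : Subsingleton (s ⟶ s) := ⟨((IsZero.iff_id_eq_zero s).2 h).eq_of_src⟩
    simp [Module.finrank_zero_of_subsingleton] at hs
  obtain ⟨c, rfl⟩ := (finrank_eq_one_iff_of_nonzero' (𝟙 s) hid).1 hs u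
  have hc : c ≠ 0 := by rintro rfl; simp at hu
  exact ⟨c⁻¹ • 𝟙 s, by simp [smul_smul, hc], by simp [smul_smul, hc]⟩

def ExtendsAlongShift (s z x : C) : Prop :=
  ∀ u : s ⟶ x, u ≠ 0 → ∀ n : s⟦(1 : ℤ)⟧ ⟶ z, ∃ m : x⟦(1 : ℤ)⟧ ⟶ z, n = u⟦(1 : ℤ)⟧' ≫ m

lemma extendsAlongShift_of_distTriang {s z a y b : C} {ia : a ⟶ y} {pb : y ⟶ b}
    {δ : b ⟶ a⟦(1 : ℤ)⟧} (hT : Triangle.mk ia pb δ ∈ distTriang C) (hbz : ∀ φ : b ⟶ z, φ = 0)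
    (ha : ExtendsAlongShift s z a) (hb : ExtendsAlongShift s z b) :
    ExtendsAlongShift s z y := by
  intro u hu n
  by_cases hub : u ≫ pb = 0
  · obtain ⟨u', hu'⟩ : ∃ u' : s ⟶ a, u = u' ≫ ia := Triangle.coyoneda_exact₂ _ hT u hub
    obtain ⟨ma, rfl⟩ := ha u' (fun h => hu (by rw [hu', h, zero_comp])) n
    -- the rotated triangle and `Hom(b, z) = 0` let `ma` extend along `ia⟦1⟧`
    obtain ⟨my, hmy⟩ : ∃ my : y⟦(1 : ℤ)⟧ ⟶ z, ma = (-ia⟦(1 : ℤ)⟧') ≫ my :=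
      Triangle.yoneda_exact₃ _ (rot_of_distTriang _ hT) ma (hbz _)
    exact ⟨-my, by simp [hu', hmy]⟩
  · obtain ⟨mb, rfl⟩ := hb (u ≫ pb) hub n
    exact ⟨pb⟦(1 : ℤ)⟧' ≫ mb, by simp⟩

lemma extendsAlongShift_of_mem_extClosure {S : Set C} (hS : IsOrthogonalCollection k S)
    {s z x : C} (hs : s ∈ S) (hz : z ∈ rightPerp S) (hx : x ∈ extClosure S) :
    ExtendsAlongShift s z x := by
  suffices extClosure S ⊆ extClosure S ∩ {y | ExtendsAlongShift s z y} from (this hx).2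
  refine extClosure_subset (fun s' hs' => ⟨subset_extClosure S hs', fun u hu n => ?_⟩) ?_
  · obtain rfl : s = s' := by_contra fun hne => hu (hS.2 s hs s' hs' hne u)
    have := isIso_of_finrank_eq_one (hS.1 s hs) hu
    exact ⟨inv (u⟦(1 : ℤ)⟧') ≫ n, by simp⟩
  · rintro y ⟨a, b, ia, pb, δ, hT, ⟨haS, ha⟩, ⟨hbS, hb⟩⟩
    exact ⟨extClosed_extClosure S ⟨a, b, ia, pb, δ, hT, haS, hbS⟩,
      extendsAlongShift_of_distTriang hT
        (extClosure_subset_leftPerp_rightPerp S hbS z hz) ha hb⟩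

lemma eq_zero_of_comp_eq_zero_of_isMinimalRightApprox {S : Set C}
    (hS : IsOrthogonalCollection k S) {sd d zd : C} {f : sd ⟶ d} {g : d ⟶ zd}
    {h : zd ⟶ sd⟦(1 : ℤ)⟧} (hT : Triangle.mk f g h ∈ distTriang C)
    (hf : IsMinimalRightApprox (extClosure S) f) (hzd : zd ∈ rightPerp S)
    {s : C} (hs : s ∈ S) {u : s ⟶ sd} (huf : u ≫ f = 0) : u = 0 := by
  by_contra hu
  obtain ⟨c, π, δ, hU⟩ := distinguished_cocone_triangle u
  have huπ : u ≫ π = 0 := comp_distTriang_mor_zero₁₂ _ hU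
  have hδu : δ ≫ u⟦(1 : ℤ)⟧' = 0 := comp_distTriang_mor_zero₃₁ _ hU
  have hfg : f ≫ g = 0 := comp_distTriang_mor_zero₁₂ _ hT
  obtain ⟨f₁, hf₁⟩ : ∃ f₁ : c ⟶ d, f = π ≫ f₁ := Triangle.yoneda_exact₂ _ hU f huf
  obtain ⟨n, hn⟩ : ∃ n : s⟦(1 : ℤ)⟧ ⟶ zd, f₁ ≫ g = δ ≫ n :=
    Triangle.yoneda_exact₃ _ hU (f₁ ≫ g)
      (by show π ≫ f₁ ≫ g = 0; rw [← Category.assoc, ← hf₁, hfg])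
  obtain ⟨m, rfl⟩ := extendsAlongShift_of_mem_extClosure hS hs hzd hf.1.1 u hu n
  obtain ⟨j, hj⟩ : ∃ j : c ⟶ sd, f₁ = j ≫ f :=
    Triangle.coyoneda_exact₂ _ hT f₁
      (by show f₁ ≫ g = 0; rw [hn, ← Category.assoc, hδu, zero_comp])
  -- `π ≫ j` fixes `f`, so it is invertible by minimality, yet it kills `u`
  have := hf.2 (π ≫ j) (by rw [Category.assoc, ← hj, ← hf₁])
  exact hu (by rw [← cancel_mono (π ≫ j), ← Category.assoc, huπ, zero_comp, zero_comp])

lemma eq_zero_of_comp_map_eq_zero {A B : Type*} [Category A] [Category B] [HasZeroMorphisms A]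
    [HasZeroMorphisms B] (F : A ⥤ B) [F.Full] [F.Faithful] [F.PreservesZeroMorphisms]
    {X Y Z : A} {χ : Y ⟶ Z} (hχ : ∀ q : X ⟶ Y, q ≫ χ = 0 → q = 0)
    {φ : F.obj X ⟶ F.obj Y} (hφ : φ ≫ F.map χ = 0) : φ = 0 := by
  obtain ⟨q, rfl⟩ := F.map_surjective φ
  rw [← F.map_comp, F.map_eq_zero_iff] at hφ
  rw [hχ q hφ, F.map_zero]

lemma SerreData.eq_zero_of_forall_comp_eq_zero {k A : Type*} [Field k] [Category A]
    [Preadditive A] [Linear k A] (SD : SerreData k A) {y z s : A} (σ : s ≅ SD.F.obj y)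
    {u : z ⟶ s} (hu : ∀ ρ : y ⟶ z, ρ ≫ u = 0) : u = 0 := by
  rw [← cancel_mono σ.hom, zero_comp]
  exact SD.nondeg₂ _ fun ρ => by rw [← Category.assoc, hu ρ, zero_comp, map_zero]

lemma comp_eq_zero_of_mor₂_comp_eq_zero {T : Triangle C} (hT : T ∈ distTriang C) {X W : C}
    (hX : ∀ q : X ⟶ T.obj₁⟦(1 : ℤ)⟧, q ≫ T.mor₁⟦(1 : ℤ)⟧' = 0 → q = 0)
    {u : T.obj₃ ⟶ W} (hu : T.mor₂ ≫ u = 0) (ρ : X ⟶ T.obj₃) : ρ ≫ u = 0 := by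
  obtain ⟨v, rfl⟩ := Triangle.yoneda_exact₃ _ hT u hu
  have h₃₁ := comp_distTriang_mor_zero₃₁ _ hT
  rw [← Category.assoc, hX (ρ ≫ T.mor₃) (by rw [Category.assoc, h₃₁, comp_zero]), zero_comp]

lemma eq_zero_of_shift_comp_eq_zero {S : Set C} (hS : IsOrthogonalCollection k S)
    {sd d zd : C} {f : sd ⟶ d} {g : d ⟶ zd} {h : zd ⟶ sd⟦(1 : ℤ)⟧}
    (hT : Triangle.mk f g h ∈ distTriang C) (hf : IsMinimalRightApprox (extClosure S) f)
    (hzd : zd ∈ rightPerp S) (SD : SerreData k C) (w : ℕ)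
    (hSw : IsSwSubcat k SD (-(w : ℤ)) S) {s : C} (hs : s ∈ S)
    {u : zd⟦(w : ℤ) - 1⟧ ⟶ s} (hu : g⟦(w : ℤ) - 1⟧' ≫ u = 0) : u = 0 := by
  obtain ⟨t, ht, ⟨σ⟩⟩ := (hSw s).1 hs
  have hinj : ∀ q : t⟦(w : ℤ) - 1⟧ ⟶ sd⟦(w : ℤ) - 1⟧,
      q ≫ (((w : ℤ) - 1).negOnePow • f⟦(w : ℤ) - 1⟧') = 0 → q = 0 := by
    intro q hq
    rw [Linear.comp_units_smul, smul_eq_zero_iff_eq] at hq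
    exact eq_zero_of_comp_map_eq_zero _
      (fun q hq => eq_zero_of_comp_eq_zero_of_isMinimalRightApprox hS hT hf hzd ht hq) hq
  have hTu : (((w : ℤ) - 1).negOnePow • g⟦(w : ℤ) - 1⟧') ≫ u = 0 := by
    rw [Linear.units_smul_comp, hu, smul_zero]
  let e : t⟦-(-(w : ℤ))⟧ ≅ t⟦(w : ℤ) - 1⟧⟦(1 : ℤ)⟧ :=
    (shiftFunctorAdd' C ((w : ℤ) - 1) 1 (-(-(w : ℤ))) (by omega)).app t
  refine SD.eq_zero_of_forall_comp_eq_zero σ fun ρ => ?_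
  have : (e.inv ≫ ρ) ≫ u = 0 :=
    comp_eq_zero_of_mor₂_comp_eq_zero (Triangle.shift_distinguished _ hT _)
      (fun q hq => eq_zero_of_comp_map_eq_zero _ hinj hq) hTu (e.inv ≫ ρ)
  calc ρ ≫ u = e.hom ≫ (e.inv ≫ ρ) ≫ u := by
        simp only [Category.assoc, Iso.hom_inv_id_assoc]
    _ = 0 := by rw [this, comp_zero]

end

theorem stmt17 (S : Set C) (hS : IsOrthogonalCollection k S)
    {sd d zd : C} (f : sd ⟶ d) (g : d ⟶ zd) (h : zd ⟶ sd⟦(1 : ℤ)⟧)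
    (hT : Triangle.mk f g h ∈ distTriang C)
    (hf : IsMinimalRightApprox (extClosure S) f)
    (hg : IsLeftApprox (rightPerp S) g ∧ LeftMinimal g) :
    (∀ s ∈ S, Function.Bijective (fun u : (s ⟶ sd) => u ≫ f)) ∧
    ∀ (SD : SerreData k C) (w : ℕ), 1 ≤ w → IsSwSubcat k SD (-(w : ℤ)) S →
      ((∀ s ∈ S, Function.Injective
          (fun u : (zd⟦(w : ℤ) - 1⟧ ⟶ s) => g⟦(w : ℤ) - 1⟧' ≫ u)) ∧
       ((∀ s ∈ S, ∀ u : d ⟶ s⟦1 - (w : ℤ)⟧, u = 0) →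
        ∀ s ∈ S, ∀ u : zd ⟶ s⟦1 - (w : ℤ)⟧, u = 0)) := by
  have hzd : zd ∈ rightPerp S := hg.1.1
  refine ⟨fun s hs => ⟨?_, fun m => hf.1.2 s (subset_extClosure S hs) m⟩,
    fun SD w _ hSw => ⟨fun s hs => ?_, fun hd s hs u => ?_⟩⟩
  · exact (injective_iff_map_eq_zero (Preadditive.rightComp s f)).2 fun u =>
      eq_zero_of_comp_eq_zero_of_isMinimalRightApprox hS hT hf hzd hs
  · exact (injective_iff_map_eq_zero (Preadditive.leftComp s (g⟦(w : ℤ) - 1⟧'))).2 fun u =>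
      eq_zero_of_shift_comp_eq_zero hS hT hf hzd SD w hSw hs
  · let e := (shiftFunctorCompIsoId C (1 - (w : ℤ)) ((w : ℤ) - 1) (by omega)).app s
    have : u⟦(w : ℤ) - 1⟧' ≫ e.hom = 0 :=
      eq_zero_of_shift_comp_eq_zero hS hT hf hzd SD w hSw hs (by
        rw [← Functor.map_comp_assoc, hd s hs (g ≫ u), Functor.map_zero, zero_comp])
    rwa [← (shiftFunctor C ((w : ℤ) - 1)).map_eq_zero_iff, ← cancel_mono e.hom, zero_comp]

end SMSPaper
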